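/- Let n, k ≥ 1 be natural numbers, let A be a real n × k matrix, let μ ∈ ℝ^n, and set Σ = A·Aᵀ. Let z be a standard Gaussian random vector in ℝ^k (law: the product over Fin k of gaussianReal 0 1) and X = A·z + μ. Then E[Π_{i=1}^{n} X_i] = Σ_σ Π_{i : i < σ(i)} Σ_{i,σ(i)} · Π_{i : σ(i) = i} μ_i, where the outer sum runs over all involutions σ of {1,…,n} (permutations with σ∘σ = id), the first product runs over the 2-cycles of σ (each counted once via the representative i < σ(i)), and the second over the fixed points of σ. -/

import Mathlib

open MeasureTheory ProbabilityTheory Finset Real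
open scoped ENNReal NNReal


noncomputable def gM (m : ℕ) : ℝ := ∫ x, x ^ m ∂(gaussianReal 0 1)

lemma pdf01 (x : ℝ) : gaussianPDFReal 0 1 x = (Real.sqrt (2 * Real.pi))⁻¹ * Real.exp (-(2⁻¹) * x ^ 2) := by
  rw [gaussianPDFReal]
  norm_num
  exact Or.inl (by ring)

lemma integrable_pow_gauss (m : ℕ) : Integrable fun x : ℝ => x ^ m * Real.exp (-(2⁻¹) * x ^ 2) := by
  have h := integrable_rpow_mul_exp_neg_mul_sq (b := 2⁻¹) (by norm_num) (s := (m : ℝ)) (lt_of_lt_of_le neg_one_lt_zero (Nat.cast_nonneg m))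
  simpa [Real.rpow_natCast] using h

lemma gauss_density (g : ℝ → ℝ) (hg : Measurable g) :
    ∫ x, g x ∂(gaussianReal 0 1) = ∫ x, gaussianPDFReal 0 1 x * g x := by
  rw [gaussianReal_of_var_ne_zero _ one_ne_zero]
  have : (gaussianPDF 0 1) = fun x => ((gaussianPDFReal 0 1 x).toNNReal : ℝ≥0∞) := rfl
  rw [this, integral_withDensity_eq_integral_smul
    ((measurable_gaussianPDFReal 0 1).real_toNNReal) g]
  congr 1
  ext x
  simp [NNReal.smul_def, Real.coe_toNNReal _ (gaussianPDFReal_nonneg 0 1 x)]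

lemma gM_zero : gM 0 = 1 := by simp [gM]

lemma gM_rec (m : ℕ) : gM (m + 1) = m * gM (m - 1) := by
  have hmeas : ∀ p : ℕ, Measurable fun x : ℝ => x ^ p := fun p => measurable_id.pow_const p
  rw [gM, gM, gauss_density _ (hmeas _), gauss_density _ (hmeas _)]
  set c : ℝ := (Real.sqrt (2 * Real.pi))⁻¹ with hc
  have hpdf : ∀ x : ℝ, gaussianPDFReal 0 1 x = c * Real.exp (-(2⁻¹) * x ^ 2) := pdf01
  simp_rw [hpdf]
  set u : ℝ → ℝ := fun x => x ^ m with hu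
  set v : ℝ → ℝ := fun x => -(c * Real.exp (-(2⁻¹) * x ^ 2)) with hv
  set u' : ℝ → ℝ := fun x => m * x ^ (m - 1) with hu'
  set v' : ℝ → ℝ := fun x => x * (c * Real.exp (-(2⁻¹) * x ^ 2)) with hv'
  have hud : ∀ x, HasDerivAt u (u' x) x := fun x => hasDerivAt_pow m x
  have hvd : ∀ x, HasDerivAt v (v' x) x := by
    intro x
    have h1 : HasDerivAt (fun x : ℝ => -(2⁻¹) * x ^ 2) (-(2⁻¹) * (2 * x)) x :=
      ((hasDerivAt_pow 2 x).const_mul _).congr_deriv (by ring_nf)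
    have h2 := (h1.exp.const_mul c).neg
    refine h2.congr_deriv ?_
    show _ = x * (c * Real.exp (-(2⁻¹) * x ^ 2))
    ring
  have hint : ∀ p : ℕ, Integrable fun x : ℝ => x ^ p * (c * Real.exp (-(2⁻¹) * x ^ 2)) := by
    intro p
    have := (integrable_pow_gauss p).const_mul c
    apply this.congr
    filter_upwards with x; ring
  have huv' : Integrable (u * v') := by
    have := hint (m + 1)
    apply this.congr; filter_upwards with x; simp [hu, hv']; ring
  have hu'v : Integrable (u' * v) := by
    have := ((hint (m - 1)).const_mul (m : ℝ)).neg
    apply this.congr; filter_upwards with x; simp [hu', hv]; ring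
  have huv : Integrable (u * v) := by
    have := (hint m).neg
    apply this.congr; filter_upwards with x; simp [hu, hv]
  have key := integral_mul_deriv_eq_deriv_mul_of_integrable (fun x _ => hud x) (fun x _ => hvd x) huv' hu'v huv
  calc ∫ x, c * Real.exp (-(2⁻¹) * x ^ 2) * x ^ (m + 1)
      = ∫ x, u x * v' x := by congr 1; ext x; simp [hu, hv']; ring
    _ = - ∫ x, u' x * v x := key
    _ = ∫ x, (m : ℝ) * (x ^ (m-1) * (c * Real.exp (-(2⁻¹) * x ^ 2))) := by
        rw [← integral_neg]; congr 1; ext x; simp [hu', hv]; ring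
    _ = (m : ℝ) * ∫ x, c * Real.exp (-(2⁻¹) * x ^ 2) * x ^ (m - 1) := by
        rw [integral_const_mul]
        congr 1
        exact integral_congr_ae (Filter.Eventually.of_forall fun x => by ring)
lemma integrable_pow_gaussianReal (p : ℕ) :
    Integrable (fun x : ℝ => x ^ p) (gaussianReal 0 1) := by
  rw [gaussianReal_of_var_ne_zero _ one_ne_zero]
  have : (gaussianPDF 0 1) = fun x => ((gaussianPDFReal 0 1 x).toNNReal : ℝ≥0∞) := rfl
  rw [this, integrable_withDensity_iff_integrable_smul
    ((measurable_gaussianPDFReal 0 1).real_toNNReal)]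
  have h : Integrable (fun x : ℝ => gaussianPDFReal 0 1 x * x ^ p) := by
    have := ((integrable_pow_gauss p).const_mul ((Real.sqrt (2 * Real.pi))⁻¹))
    apply this.congr
    filter_upwards with x
    rw [pdf01]; ring
  apply h.congr
  filter_upwards with x
  simp [NNReal.smul_def, Real.coe_toNNReal _ (gaussianPDFReal_nonneg 0 1 x)]

lemma integrable_pi_pow {k : ℕ} (m : Fin k → ℕ) :
    Integrable (fun z : Fin k → ℝ => ∏ j, (z j) ^ (m j))
      (Measure.pi fun _ : Fin k => gaussianReal 0 1) := by
  letI : MeasureSpace ℝ := ⟨gaussianReal 0 1⟩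
  haveI : SigmaFinite (volume : Measure ℝ) := (inferInstance : SigmaFinite (gaussianReal 0 1))
  exact Integrable.fintype_prod (f := fun j (x : ℝ) => x ^ (m j))
    (fun j => integrable_pow_gaussianReal (m j))

lemma integral_pi_pow {k : ℕ} (m : Fin k → ℕ) :
    ∫ z : Fin k → ℝ, ∏ j, (z j) ^ (m j)
      ∂(Measure.pi fun _ : Fin k => gaussianReal 0 1) = ∏ j, gM (m j) := by
  letI : MeasureSpace ℝ := ⟨gaussianReal 0 1⟩
  haveI : SigmaFinite (volume : Measure ℝ) := (inferInstance : SigmaFinite (gaussianReal 0 1))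
  exact MeasureTheory.integral_fintype_prod_eq_prod
    (fun j (x : ℝ) => x ^ (m j))
section Comb

variable {α β : Type*} [Fintype α] [LinearOrder α] [Fintype β] [DecidableEq β]

def FF (β : Type*) [Fintype β] [DecidableEq β] (s : Finset α) : Finset (α → Option β) :=
  Fintype.piFinset fun i => if i ∈ s then (univ : Finset (Option β)) else {none}

lemma mem_FF {s : Finset α} {f : α → Option β} :
    f ∈ FF β s ↔ ∀ i, i ∉ s → f i = none := by
  simp only [FF, Fintype.mem_piFinset]
  constructor
  · intro h i hi
    have := h i
    rw [if_neg hi] at this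
    simpa using this
  · intro h i
    by_cases hi : i ∈ s
    · simp [hi]
    · simp [hi, h i hi]

def cnt (f : α → Option β) (j : β) : ℕ := (univ.filter fun i => f i = some j).card

def KK (a : α → Option β → ℝ) (x y : α) : ℝ := ∑ l : β, a x (some l) * a y (some l)

def LL (M : ℕ → ℝ) (a : α → Option β → ℝ) (s : Finset α) : ℝ :=
  ∑ f ∈ FF β s, (∏ i ∈ s, a i (f i)) * ∏ j : β, M (cnt f j)

def PP (α : Type*) [Fintype α] [DecidableEq α] (s : Finset α) : Finset (Equiv.Perm α) :=
  univ.filter fun σ => σ * σ = 1 ∧ ∀ i, i ∉ s → σ i = i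

def RR (a : α → Option β → ℝ) (s : Finset α) : ℝ :=
  ∑ σ ∈ PP α s, (∏ i ∈ s.filter fun i => i < σ i, KK a i (σ i)) *
    ∏ i ∈ s.filter fun i => σ i = i, a i none

lemma FF_split {s : Finset α} {x : α} (hx : x ∈ s) (g : (α → Option β) → ℝ) :
    ∑ f ∈ FF β s, g f = ∑ o : Option β, ∑ h ∈ FF β (s.erase x), g (Function.update h x o) := by
  rw [← Finset.sum_product']
  refine Finset.sum_nbij' (i := fun f => (f x, Function.update f x none))
      (j := fun p => Function.update p.2 x p.1) ?_ ?_ ?_ ?_ ?_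
  · intro f hf
    simp only [Finset.mem_product, Finset.mem_univ, true_and]
    rw [mem_FF] at hf ⊢
    intro i hi
    by_cases hix : i = x
    · subst hix; simp
    · rw [Function.update_of_ne hix]
      exact hf i (fun h' => hi (Finset.mem_erase.2 ⟨hix, h'⟩))
  · rintro ⟨o, h⟩ hp
    simp only [Finset.mem_product, Finset.mem_univ, true_and] at hp
    rw [mem_FF] at hp ⊢
    intro i hi
    have hix : i ≠ x := fun h' => hi (h' ▸ hx)
    show Function.update h x o i = none
    rw [Function.update_of_ne hix]
    exact hp i (fun h' => hi (Finset.mem_of_mem_erase h'))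
  · intro f hf
    simp [Function.update_idem, Function.update_eq_self]
  · rintro ⟨o, h⟩ hp
    simp only [Finset.mem_product, Finset.mem_univ, true_and] at hp
    rw [mem_FF] at hp
    have hhx : h x = none := hp x (Finset.notMem_erase x s)
    show (Function.update h x o x, Function.update (Function.update h x o) x none) = (o, h)
    rw [Function.update_self, Function.update_idem, ← hhx, Function.update_eq_self]
  · intro f hf
    simp

end Comb
section Comb2

variable {α β : Type*} [Fintype α] [LinearOrder α] [Fintype β] [DecidableEq β]

lemma prod_update_insert {s' : Finset α} {x : α} (hx : x ∉ s') (a : α → Option β → ℝ)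
    (h : α → Option β) (o : Option β) :
    ∏ i ∈ insert x s', a i (Function.update h x o i) = a x o * ∏ i ∈ s', a i (h i) := by
  rw [Finset.prod_insert hx, Function.update_self]
  congr 1
  apply Finset.prod_congr rfl
  intro i hi
  rw [Function.update_of_ne (fun h' => hx (by rwa [h'] at hi))]

lemma cnt_update_some {h : α → Option β} {x : α} (hhx : h x = none) (l j : β) :
    cnt (Function.update h x (some l)) j = if j = l then cnt h j + 1 else cnt h j := by
  unfold cnt
  by_cases hjl : j = l
  · subst hjl
    rw [if_pos rfl]
    have : (Finset.univ.filter fun i => Function.update h x (some j) i = some j)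
        = insert x (Finset.univ.filter fun i => h i = some j) := by
      ext i
      simp only [Finset.mem_filter, Finset.mem_univ, true_and, Finset.mem_insert]
      by_cases hix : i = x
      · subst hix; simp
      · rw [Function.update_of_ne hix]; simp [hix]
    rw [this, Finset.card_insert_of_notMem (by simp [hhx])]
  · rw [if_neg hjl]
    congr 1
    apply Finset.filter_congr
    intro i _
    by_cases hix : i = x
    · subst hix
      simp only [Function.update_self, hhx]
      constructor <;> intro hh <;> simp_all
    · rw [Function.update_of_ne hix]

lemma FF_reindex {s' : Finset α} {y : α} (hy : y ∈ s') (l : β) (g : (α → Option β) → ℝ) :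
    ∑ h ∈ (FF β s').filter (fun h => h y = some l), g h
      = ∑ t ∈ FF β (s'.erase y), g (Function.update t y (some l)) := by
  refine Finset.sum_nbij' (i := fun h => Function.update h y none)
      (j := fun t => Function.update t y (some l)) ?_ ?_ ?_ ?_ ?_
  · intro h hh
    rw [Finset.mem_filter] at hh
    rw [mem_FF] at hh ⊢
    intro i hi
    show Function.update h y none i = none
    by_cases hiy : i = y
    · subst hiy; simp
    · rw [Function.update_of_ne hiy]
      exact hh.1 i (fun h' => hi (Finset.mem_erase.2 ⟨hiy, h'⟩))
  · intro t ht
    rw [mem_FF] at ht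
    rw [Finset.mem_filter, mem_FF]
    refine ⟨fun i hi => ?_, by simp⟩
    have hiy : i ≠ y := fun h' => hi (h' ▸ hy)
    show Function.update t y (some l) i = none
    rw [Function.update_of_ne hiy]
    exact ht i (fun h' => hi (Finset.mem_of_mem_erase h'))
  · intro h hh
    rw [Finset.mem_filter] at hh
    show Function.update (Function.update h y none) y (some l) = h
    rw [Function.update_idem, ← hh.2, Function.update_eq_self]
  · intro t ht
    rw [mem_FF] at ht
    have h0 : t y = none := ht y (Finset.notMem_erase y s')
    show Function.update (Function.update t y (some l)) y none = t
    rw [Function.update_idem, ← h0, Function.update_eq_self]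
  · intro h hh
    rw [Finset.mem_filter] at hh
    rw [Function.update_idem, ← hh.2, Function.update_eq_self]

lemma LL_split (M : ℕ → ℝ) (a : α → Option β → ℝ)
    (hMrec : ∀ m : ℕ, M (m + 1) = m * M (m - 1)) {s : Finset α} {x : α} (hx : x ∈ s) :
    LL M a s = a x none * LL M a (s.erase x) +
      ∑ y ∈ s.erase x, KK a x y * LL M a ((s.erase x).erase y) := by
  classical
  set s' := s.erase x with hs'
  have hxs' : x ∉ s' := Finset.notMem_erase x s
  have hs : s = insert x s' := (Finset.insert_erase hx).symm
  rw [LL, FF_split hx, Fintype.sum_option]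
  congr 1
  · -- none part
    rw [LL, Finset.mul_sum]
    apply Finset.sum_congr rfl
    intro h hh
    rw [mem_FF] at hh
    have hhx : h x = none := hh x hxs'
    have hupd : Function.update h x none = h := by rw [← hhx, Function.update_eq_self]
    rw [hupd, hs, ← Finset.mul_prod_erase (insert x s') _ (Finset.mem_insert_self x s'),
      Finset.erase_insert hxs', hhx]
    ring
  · -- some part
    have key : ∀ l : β, ∑ h ∈ FF β s',
        (∏ i ∈ s, a i (Function.update h x (some l) i)) *
          ∏ j : β, M (cnt (Function.update h x (some l)) j)
        = ∑ y ∈ s', (a x (some l) * a y (some l)) * LL M a (s'.erase y) := by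
      intro l
      have step1 : ∀ h ∈ FF β s',
          (∏ i ∈ s, a i (Function.update h x (some l) i)) *
            ∏ j : β, M (cnt (Function.update h x (some l)) j)
          = ∑ y ∈ Finset.univ.filter (fun y => h y = some l),
              (a x (some l) * ∏ i ∈ s', a i (h i)) *
                (M (cnt h l - 1) * ∏ j ∈ Finset.univ.erase l, M (cnt h j)) := by
        intro h hh
        rw [mem_FF] at hh
        have hhx : h x = none := hh x hxs'
        rw [hs, prod_update_insert hxs']
        rw [← Finset.mul_prod_erase Finset.univ _ (Finset.mem_univ l)]
        have h1 : cnt (Function.update h x (some l)) l = cnt h l + 1 := by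
          rw [cnt_update_some hhx, if_pos rfl]
        have h2 : ∏ j ∈ Finset.univ.erase l, M (cnt (Function.update h x (some l)) j)
            = ∏ j ∈ Finset.univ.erase l, M (cnt h j) := by
          apply Finset.prod_congr rfl
          intro j hj
          rw [cnt_update_some hhx, if_neg (Finset.mem_erase.1 hj).1]
        rw [h1, h2, hMrec, Finset.sum_const,
          show (Finset.univ.filter fun y => h y = some l).card = cnt h l from rfl,
          nsmul_eq_mul]
        ring
      rw [Finset.sum_congr rfl step1]
      -- swap sums and reindex
      have hfil : ∀ h ∈ FF β s', (Finset.univ.filter (fun y => h y = some l))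
          = s'.filter (fun y => h y = some l) := by
        intro h hh
        rw [mem_FF] at hh
        ext y
        simp only [Finset.mem_filter, Finset.mem_univ, true_and]
        constructor
        · intro hyl
          refine ⟨?_, hyl⟩
          by_contra hys
          rw [hh y hys] at hyl
          simp at hyl
        · exact fun h' => h'.2
      rw [Finset.sum_congr rfl (fun h hh => by rw [hfil h hh])]
      simp_rw [Finset.sum_filter]
      rw [Finset.sum_comm]
      simp_rw [← Finset.sum_filter]
      apply Finset.sum_congr rfl
      intro y hy
      rw [FF_reindex hy l]
      rw [LL, Finset.mul_sum]
      apply Finset.sum_congr rfl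
      intro t ht
      rw [mem_FF] at ht
      have hty : t y = none := ht y (Finset.notMem_erase y s')
      have e1 : ∏ i ∈ s', a i (Function.update t y (some l) i)
          = a y (some l) * ∏ i ∈ s'.erase y, a i (t i) := by
        conv_lhs => rw [← Finset.insert_erase hy]
        rw [prod_update_insert (Finset.notMem_erase y s')]
      have e2 : cnt (Function.update t y (some l)) l - 1 = cnt t l := by
        rw [cnt_update_some hty, if_pos rfl]
        simp
      have e3 : ∏ j ∈ Finset.univ.erase l, M (cnt (Function.update t y (some l)) j)
          = ∏ j ∈ Finset.univ.erase l, M (cnt t j) := by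
        apply Finset.prod_congr rfl
        intro j hj
        rw [cnt_update_some hty, if_neg (Finset.mem_erase.1 hj).1]
      rw [e1, e2, e3,
        ← Finset.mul_prod_erase Finset.univ (fun j => M (cnt t j)) (Finset.mem_univ l)]
      ring
    rw [Finset.sum_congr rfl (fun l _ => key l), Finset.sum_comm]
    apply Finset.sum_congr rfl
    intro y _
    rw [← Finset.sum_mul, KK]

end Comb2
section Comb3

variable {α β : Type*} [Fintype α] [LinearOrder α] [Fintype β] [DecidableEq β]

lemma mem_PP {s : Finset α} {σ : Equiv.Perm α} :
    σ ∈ PP α s ↔ σ * σ = 1 ∧ ∀ i, i ∉ s → σ i = i := by simp [PP]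

lemma invol_apply {σ : Equiv.Perm α} (hσ : σ * σ = 1) (i : α) : σ (σ i) = i := by
  rw [← Equiv.Perm.mul_apply, hσ, Equiv.Perm.one_apply]

lemma PP_maps_to {s : Finset α} {σ : Equiv.Perm α} (hσ : σ ∈ PP α s) {i : α} (hi : i ∈ s) :
    σ i ∈ s := by
  rw [mem_PP] at hσ
  by_contra hsi
  have h1 : σ (σ i) = σ i := hσ.2 _ hsi
  rw [invol_apply hσ.1] at h1
  exact hsi (h1 ▸ hi)

lemma RR_split (a : α → Option β → ℝ) {s : Finset α} {x : α} (hx : x ∈ s)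
    (hmin : ∀ i ∈ s, x ≤ i) :
    RR a s = a x none * RR a (s.erase x) +
      ∑ y ∈ s.erase x, KK a x y * RR a ((s.erase x).erase y) := by
  classical
  set s' := s.erase x with hs'
  have hxs' : x ∉ s' := Finset.notMem_erase x s
  rw [RR, ← Finset.sum_fiberwise_of_maps_to (g := fun σ => σ x)
    (fun σ hσ => PP_maps_to hσ hx), ← Finset.add_sum_erase _ _ hx]
  congr 1
  · -- fiber y = x
    have hset : (PP α s).filter (fun σ => σ x = x) = PP α s' := by
      ext σ
      simp only [Finset.mem_filter, mem_PP]
      constructor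
      · rintro ⟨⟨h1, h2⟩, h3⟩
        refine ⟨h1, fun i hi => ?_⟩
        by_cases hix : i = x
        · subst hix; exact h3
        · exact h2 i (fun h' => hi (Finset.mem_erase.2 ⟨hix, h'⟩))
      · rintro ⟨h1, h2⟩
        exact ⟨⟨h1, fun i hi => h2 i (fun h' => hi (Finset.mem_of_mem_erase h'))⟩,
          h2 x hxs'⟩
    rw [hset, RR, Finset.mul_sum]
    apply Finset.sum_congr rfl
    intro σ hσ
    rw [mem_PP] at hσ
    have hσx : σ x = x := hσ.2 x hxs'
    have hf1 : s.filter (fun i => i < σ i) = s'.filter (fun i => i < σ i) := by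
      conv_lhs => rw [← Finset.insert_erase hx]
      rw [Finset.filter_insert, if_neg (by rw [hσx]; exact lt_irrefl x)]
    have hf2 : s.filter (fun i => σ i = i) = insert x (s'.filter (fun i => σ i = i)) := by
      conv_lhs => rw [← Finset.insert_erase hx]
      rw [Finset.filter_insert, if_pos hσx]
    rw [hf1, hf2, Finset.prod_insert (fun h' => hxs' (Finset.mem_of_mem_filter x h'))]
    ring
  · -- fibers y ≠ x
    apply Finset.sum_congr rfl
    intro y hy
    have hyx : y ≠ x := (Finset.mem_erase.1 hy).1
    have hys : y ∈ s := Finset.mem_of_mem_erase hy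
    have hxy : x < y := lt_of_le_of_ne (hmin y hys) (Ne.symm hyx)
    set s'' := s'.erase y with hs''
    have hxs'' : x ∉ s'' := fun h' => hxs' (Finset.mem_of_mem_erase h')
    have hys'' : y ∉ s'' := Finset.notMem_erase y s'
    rw [RR, Finset.mul_sum]
    refine Finset.sum_nbij' (i := fun σ => Equiv.swap x y * σ)
        (j := fun τ => Equiv.swap x y * τ) ?_ ?_ ?_ ?_ ?_
    · -- maps to PP s''
      intro σ hσ
      rw [Finset.mem_filter, mem_PP] at hσ
      obtain ⟨⟨h1, h2⟩, h3⟩ := hσ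
      have hσy : σ y = x := by rw [← h3, invol_apply h1]
      have hinv : σ⁻¹ = σ := by
        rw [← one_mul σ⁻¹, ← h1, mul_assoc, mul_inv_cancel, mul_one]
      rw [mem_PP]
      constructor
      · have hc : σ * Equiv.swap x y * σ⁻¹ = Equiv.swap (σ x) (σ y) :=
          (Equiv.swap_apply_apply σ x y).symm
        rw [hinv, h3, hσy] at hc
        calc Equiv.swap x y * σ * (Equiv.swap x y * σ)
            = Equiv.swap x y * (σ * Equiv.swap x y * σ) := by group
          _ = Equiv.swap x y * Equiv.swap y x := by rw [hc]
          _ = 1 := by rw [Equiv.swap_comm x y]; exact Equiv.swap_mul_self y x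
      · intro i hi
        rw [Equiv.Perm.mul_apply]
        by_cases hix : i = x
        · subst hix; rw [h3, Equiv.swap_apply_right]
        · by_cases hiy : i = y
          · subst hiy; rw [hσy, Equiv.swap_apply_left]
          · have his : i ∉ s := fun his =>
              hi (Finset.mem_erase.2 ⟨hiy, Finset.mem_erase.2 ⟨hix, his⟩⟩)
            rw [h2 i his, Equiv.swap_apply_of_ne_of_ne hix hiy]
    · -- j maps back
      intro τ hτ
      rw [mem_PP] at hτ
      obtain ⟨h1, h2⟩ := hτ
      have hτx : τ x = x := h2 x hxs''
      have hτy : τ y = y := h2 y hys''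
      have hinv : τ⁻¹ = τ := by
        rw [← one_mul τ⁻¹, ← h1, mul_assoc, mul_inv_cancel, mul_one]
      rw [Finset.mem_filter, mem_PP]
      refine ⟨⟨?_, ?_⟩, ?_⟩
      · have hc : τ * Equiv.swap x y * τ⁻¹ = Equiv.swap (τ x) (τ y) :=
          (Equiv.swap_apply_apply τ x y).symm
        rw [hinv, hτx, hτy] at hc
        calc Equiv.swap x y * τ * (Equiv.swap x y * τ)
            = Equiv.swap x y * (τ * Equiv.swap x y * τ) := by group
          _ = Equiv.swap x y * Equiv.swap x y := by rw [hc]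
          _ = 1 := Equiv.swap_mul_self x y
      · intro i hi
        rw [Equiv.Perm.mul_apply]
        have hix : i ≠ x := fun h' => hi (h' ▸ hx)
        have hiy : i ≠ y := fun h' => hi (h' ▸ hys)
        have his'' : i ∉ s'' := fun h' =>
          hi (Finset.mem_of_mem_erase (Finset.mem_of_mem_erase h'))
        rw [h2 i his'', Equiv.swap_apply_of_ne_of_ne hix hiy]
      · rw [Equiv.Perm.mul_apply, hτx, Equiv.swap_apply_left]
    · intro σ _
      show Equiv.swap x y * (Equiv.swap x y * σ) = σ
      rw [← mul_assoc, Equiv.swap_mul_self, one_mul]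
    · intro τ _
      show Equiv.swap x y * (Equiv.swap x y * τ) = τ
      rw [← mul_assoc, Equiv.swap_mul_self, one_mul]
    · -- weights
      intro σ hσ
      rw [Finset.mem_filter, mem_PP] at hσ
      obtain ⟨⟨h1, h2⟩, h3⟩ := hσ
      have hσy : σ y = x := by rw [← h3, invol_apply h1]
      set τ := Equiv.swap x y * σ with hτ
      have hτeq : ∀ i, i ≠ x → i ≠ y → τ i = σ i := by
        intro i hix hiy
        have hσix : σ i ≠ y := fun h' => hix (by rw [← h3] at h'; exact σ.injective h')
        have hσiy : σ i ≠ x := fun h' => hiy (by rw [← hσy] at h'; exact σ.injective h')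
        rw [hτ, Equiv.Perm.mul_apply, Equiv.swap_apply_of_ne_of_ne hσiy hσix]
      have hf1 : s.filter (fun i => i < σ i) = insert x (s''.filter (fun i => i < τ i)) := by
        ext i
        simp only [Finset.mem_filter, Finset.mem_insert, hs'', hs', Finset.mem_erase]
        by_cases hix : i = x
        · subst hix
          exact ⟨fun _ => Or.inl rfl, fun _ => ⟨hx, by rw [h3]; exact hxy⟩⟩
        · by_cases hiy : i = y
          · subst hiy
            constructor
            · rintro ⟨_, hlt⟩
              rw [hσy] at hlt
              exact absurd hlt (not_lt.2 hxy.le)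
            · rintro (h' | ⟨⟨hyy, _⟩, _⟩)
              · exact absurd h' hyx
              · exact absurd rfl hyy
          · rw [hτeq i hix hiy]
            constructor
            · rintro ⟨his, hlt⟩
              exact Or.inr ⟨⟨hiy, hix, his⟩, hlt⟩
            · rintro (h' | ⟨⟨_, _, his⟩, hlt⟩)
              · exact absurd h' hix
              · exact ⟨his, hlt⟩
      have hf2 : s.filter (fun i => σ i = i) = s''.filter (fun i => τ i = i) := by
        ext i
        simp only [Finset.mem_filter, hs'', hs', Finset.mem_erase]
        by_cases hix : i = x
        · subst hix
          constructor
          · rintro ⟨_, hfix⟩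
            rw [h3] at hfix
            exact absurd hfix hyx
          · rintro ⟨⟨_, hxx, _⟩, _⟩
            exact absurd rfl hxx
        · by_cases hiy : i = y
          · subst hiy
            constructor
            · rintro ⟨_, hfix⟩
              rw [hσy] at hfix
              exact absurd hfix (Ne.symm hyx)
            · rintro ⟨⟨hyy, _⟩, _⟩
              exact absurd rfl hyy
          · rw [hτeq i hix hiy]
            constructor
            · rintro ⟨his, hfix⟩
              exact ⟨⟨hiy, hix, his⟩, hfix⟩
            · rintro ⟨⟨_, _, his⟩, hfix⟩
              exact ⟨his, hfix⟩
      have hxnot : x ∉ s''.filter (fun i => i < τ i) := fun h' =>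
        hxs'' (Finset.mem_of_mem_filter x h')
      rw [hf1, hf2, Finset.prod_insert hxnot, h3]
      have hprod : ∏ i ∈ s''.filter (fun i => i < τ i), KK a i (σ i)
          = ∏ i ∈ s''.filter (fun i => i < τ i), KK a i (τ i) := by
        apply Finset.prod_congr rfl
        intro i hi
        have hi'' := Finset.mem_of_mem_filter i hi
        have hiy : i ≠ y := (Finset.mem_erase.1 hi'').1
        have hix : i ≠ x := (Finset.mem_erase.1 (Finset.mem_erase.1 hi'').2).1
        rw [hτeq i hix hiy]
      rw [hprod]
      ring

end Comb3
section Comb4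

variable {α β : Type*} [Fintype α] [LinearOrder α] [Fintype β] [DecidableEq β]

lemma LL_empty (M : ℕ → ℝ) (a : α → Option β → ℝ) (hM0 : M 0 = 1) :
    LL M a (∅ : Finset α) = 1 := by
  have hFF : FF β (∅ : Finset α) = {fun _ => none} := by
    ext f
    rw [mem_FF, Finset.mem_singleton]
    constructor
    · intro h; funext i; exact h i (Finset.notMem_empty i)
    · intro h i _; rw [h]
  rw [LL, hFF, Finset.sum_singleton, Finset.prod_empty, one_mul]
  have hc : ∀ j : β, cnt (fun _ : α => (none : Option β)) j = 0 := by
    intro j; simp [cnt]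
  rw [Finset.prod_congr rfl (fun j _ => by rw [hc j, hM0])]
  simp

lemma RR_empty (a : α → Option β → ℝ) : RR a (∅ : Finset α) = 1 := by
  have hPP : PP α (∅ : Finset α) = {1} := by
    ext σ
    rw [mem_PP, Finset.mem_singleton]
    constructor
    · rintro ⟨_, h2⟩
      exact Equiv.ext fun i => h2 i (Finset.notMem_empty i)
    · rintro rfl
      exact ⟨one_mul 1, fun i _ => rfl⟩
  rw [RR, hPP, Finset.sum_singleton]
  simp

theorem LL_eq_RR (M : ℕ → ℝ) (a : α → Option β → ℝ) (hM0 : M 0 = 1)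
    (hMrec : ∀ m : ℕ, M (m + 1) = m * M (m - 1)) (s : Finset α) :
    LL M a s = RR a s := by
  induction s using Finset.strongInductionOn with
  | _ s ih =>
    rcases s.eq_empty_or_nonempty with rfl | hne
    · rw [LL_empty M a hM0, RR_empty]
    · have hx : s.min' hne ∈ s := s.min'_mem hne
      rw [LL_split M a hMrec hx, RR_split a hx (fun i hi => s.min'_le i hi),
        ih _ (Finset.erase_ssubset hx)]
      congr 1
      apply Finset.sum_congr rfl
      intro y _
      rw [ih _ (Finset.ssubset_of_subset_of_ssubset (Finset.erase_subset _ _)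
        (Finset.erase_ssubset hx))]

end Comb4
lemma prod_elim_eq_pow {n k : ℕ} (f : Fin n → Option (Fin k)) (z : Fin k → ℝ) :
    ∏ i, ((f i).elim 1 z : ℝ) = ∏ j, (z j) ^ (cnt f j) := by
  rw [← Finset.prod_fiberwise_of_maps_to (g := f) (fun i _ => Finset.mem_univ (f i))
    (f := fun i => ((f i).elim 1 z : ℝ))]
  have h1 : ∀ o : Option (Fin k), ∏ i ∈ Finset.univ.filter (fun i => f i = o),
      ((f i).elim 1 z : ℝ) = (o.elim 1 z : ℝ) ^ ((Finset.univ.filter (fun i => f i = o)).card) := by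
    intro o
    rw [Finset.prod_congr rfl (fun i hi => by rw [(Finset.mem_filter.1 hi).2]),
      Finset.prod_const]
  rw [Finset.prod_congr rfl (fun o _ => h1 o), Fintype.prod_option]
  simp [cnt]

theorem stmt_14 (n k : ℕ) (hn : 1 ≤ n) (hk : 1 ≤ k)
    (A : Matrix (Fin n) (Fin k) ℝ) (μ : Fin n → ℝ) :
    ∫ z : Fin k → ℝ, (∏ i, (A.mulVec z i + μ i))
      ∂(Measure.pi fun _ : Fin k => gaussianReal 0 1) =
    ∑ σ ∈ Finset.univ.filter (fun σ : Equiv.Perm (Fin n) => σ * σ = 1),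
      (∏ i ∈ Finset.univ.filter (fun i : Fin n => i < σ i), (A * A.transpose) i (σ i)) *
        (∏ i ∈ Finset.univ.filter (fun i : Fin n => σ i = i), μ i) := by
  classical
  set a : Fin n → Option (Fin k) → ℝ := fun i o => o.elim (μ i) (fun j => A i j) with ha
  -- pointwise expansion
  have hexp : ∀ z : Fin k → ℝ, ∏ i, (A.mulVec z i + μ i)
      = ∑ f ∈ FF (Fin k) (Finset.univ : Finset (Fin n)),
          (∏ i, a i (f i)) * ∏ j, (z j) ^ (cnt f j) := by
    intro z
    have h1 : ∀ i, A.mulVec z i + μ i = ∑ o : Option (Fin k), a i o * (o.elim 1 z : ℝ) := by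
      intro i
      calc A.mulVec z i + μ i = μ i * 1 + ∑ j, A i j * z j := by
            rw [mul_one, add_comm]
            rfl
        _ = ∑ o : Option (Fin k), a i o * (o.elim 1 z : ℝ) := by
            rw [Fintype.sum_option]
            rfl
    rw [Finset.prod_congr rfl (fun i _ => h1 i), Finset.prod_univ_sum]
    refine Finset.sum_congr ?_ (fun f _ => ?_)
    · ext f
      simp [mem_FF, Fintype.mem_piFinset]
    · rw [Finset.prod_mul_distrib, prod_elim_eq_pow]
  rw [integral_congr_ae (Filter.Eventually.of_forall hexp), integral_finset_sum _
    (fun f _ => ((integrable_pi_pow (cnt f)).const_mul _))]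
  have hint : ∀ f ∈ FF (Fin k) (Finset.univ : Finset (Fin n)),
      ∫ z : Fin k → ℝ, (∏ i, a i (f i)) * ∏ j, (z j) ^ (cnt f j)
        ∂(Measure.pi fun _ : Fin k => gaussianReal 0 1)
      = (∏ i, a i (f i)) * ∏ j, gM (cnt f j) := by
    intro f _
    rw [integral_const_mul, integral_pi_pow]
  rw [Finset.sum_congr rfl hint]
  have hLL : ∑ f ∈ FF (Fin k) (Finset.univ : Finset (Fin n)),
      (∏ i, a i (f i)) * ∏ j, gM (cnt f j) = LL gM a Finset.univ := rfl
  rw [hLL, LL_eq_RR gM a gM_zero gM_rec, RR]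
  refine Finset.sum_congr ?_ (fun σ _ => ?_)
  · ext σ
    simp [PP]
  · congr 1
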